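/- The Method of Equal Shares (with lexicographic tie-breaking and no completion procedure) satisfies OIIA: removing a non-winning alternative from any voter's current-round approval set does not change the current-round winner (including the case of termination without a winner). -/
import Mathlib


open scoped Classical

noncomputable section

/-- A one-round approval profile: each of the `n` voters approves a finite set of
alternatives (alternatives are natural numbers). -/
abbrev Profile (n : ℕ) := Fin n → Finset ℕ

/-- An online temporal voting rule: given the round index `t` and the (infinite
sequence of) approval profiles, it returns the winning alternative of round `t`.
Online rules only look at rounds `0,…,t`. -/
abbrev VRule (n : ℕ) := ℕ → (ℕ → Profile n) → ℕ

/-- Replace voter `i`'s approval set in round `t` by `S`, keeping everything else. -/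
def updateRound {n : ℕ} (A : ℕ → Profile n) (t : ℕ) (i : Fin n) (S : Finset ℕ) :
    ℕ → Profile n :=
  fun s => if s = t then Function.update (A s) i S else A s

/-- A rule is online if the round-`t` winner only depends on rounds `0,…,t`. -/
def OnlineRule {n : ℕ} (R : VRule n) : Prop :=
  ∀ (t : ℕ) (A B : ℕ → Profile n), (∀ s, s ≤ t → A s = B s) → R t A = R t B

/-- Monotonicity: if `c` wins round `t`, adding `c` to any voter's round-`t`
approval set keeps `c` the round-`t` winner. -/
def IsMonotone {n : ℕ} (R : VRule n) : Prop :=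
  ∀ (A : ℕ → Profile n) (t : ℕ) (i : Fin n),
    R t (updateRound A t i (A t i ∪ {R t A})) = R t A

/-- Online independence of irrelevant alternatives: removing a non-winning
alternative `d` from any single voter's round-`t` approvals keeps the winner. -/
def OIIA {n : ℕ} (R : VRule n) : Prop :=
  ∀ (A : ℕ → Profile n) (t : ℕ) (i : Fin n) (d : ℕ), d ≠ R t A →
    R t (updateRound A t i ((A t i).erase d)) = R t A

/-- Online strategyproofness: fixing previous rounds and the other voters, no
misreport `S` by voter `i` in round `t` can turn the round-`t` winner from a
(truthfully) unapproved alternative into an approved one. -/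
def OSP {n : ℕ} (R : VRule n) : Prop :=
  ∀ (A : ℕ → Profile n) (t : ℕ) (i : Fin n) (S : Finset ℕ),
    R t (updateRound A t i S) ∈ A t i → R t A ∈ A t i

/-- `B` deviates from `A` only in voter `i`'s reports. -/
def Deviation {n : ℕ} (i : Fin n) (A B : ℕ → Profile n) : Prop :=
  ∀ (t : ℕ) (j : Fin n), j ≠ i → B t j = A t j

/-- Satisfaction of the group `G` over rounds `0,…,T-1`: the number of rounds in
which the winner under the reported profile `B` is approved (in the reference,
e.g. truthful, profile `A`) by some member of `G`. -/
def satAgainst {n : ℕ} (R : VRule n) (B A : ℕ → Profile n) (T : ℕ)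
    (G : Finset (Fin n)) : ℕ :=
  ((Finset.range T).filter fun t => ∃ i ∈ G, R t B ∈ A t i).card

/-- (Full) strategyproofness: no unilateral misreport strictly increases a
voter's total satisfaction, measured against their truthful approvals. -/
def SP {n : ℕ} (R : VRule n) : Prop :=
  ∀ (A B : ℕ → Profile n) (i : Fin n) (T : ℕ), Deviation i A B →
    satAgainst R B A T {i} ≤ satAgainst R A A T {i}

/-- `G` is `ℓ`-cohesive in the first `T` rounds of `A`: in some `ℓ` rounds all
members of `G` approve a common alternative. -/
def Cohesive {n : ℕ} (A : ℕ → Profile n) (T : ℕ) (G : Finset (Fin n)) (ℓ : ℕ) : Prop :=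
  ∃ Rs : Finset ℕ, Rs ⊆ Finset.range T ∧ Rs.card = ℓ ∧
    ∀ t ∈ Rs, ∃ c, ∀ i ∈ G, c ∈ A t i

/-- Justified representation. -/
def SatisfiesJR {n : ℕ} (R : VRule n) : Prop :=
  ∀ (A : ℕ → Profile n) (T : ℕ) (G : Finset (Fin n)) (ℓ : ℕ),
    Cohesive A T G ℓ → min 1 (ℓ * G.card / n) ≤ satAgainst R A A T G

/-- Proportional justified representation. -/
def SatisfiesPJR {n : ℕ} (R : VRule n) : Prop :=
  ∀ (A : ℕ → Profile n) (T : ℕ) (G : Finset (Fin n)) (ℓ : ℕ),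
    Cohesive A T G ℓ → ℓ * G.card / n ≤ satAgainst R A A T G

end
noncomputable section

/-- Total payment collected for alternative `c` at personal payment cap `ρ`:
each approving voter pays `min (budget) ρ`. -/
def paySum {n : ℕ} (b : Fin n → ℝ) (Ap : Profile n) (c : ℕ) (ρ : ℝ) : ℝ :=
  ∑ i, if c ∈ Ap i then min (b i) ρ else 0

/-- `c` is affordable: some payment cap `ρ ≥ 0` collects at least the price `p`. -/
def Affordable {n : ℕ} (b : Fin n → ℝ) (Ap : Profile n) (p : ℝ) (c : ℕ) : Prop :=
  ∃ ρ : ℝ, 0 ≤ ρ ∧ p ≤ paySum b Ap c ρ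

/-- The minimal payment cap `ρ(c)` needed to pay for `c`. -/
def mesRho {n : ℕ} (b : Fin n → ℝ) (Ap : Profile n) (p : ℝ) (c : ℕ) : ℝ :=
  sInf {ρ : ℝ | 0 ≤ ρ ∧ p ≤ paySum b Ap c ρ}

/-- The MES round winner: the lexicographically first affordable alternative of
`Ct` minimizing `ρ(·)`; `none` if no alternative is affordable. -/
def mesWinner {n : ℕ} (b : Fin n → ℝ) (Ap : Profile n) (p : ℝ) (Ct : Finset ℕ) :
    Option ℕ :=
  if ∃ c ∈ Ct, Affordable b Ap p c then
    some (sInf {c : ℕ | c ∈ Ct ∧ Affordable b Ap p c ∧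
      ∀ c' ∈ Ct, Affordable b Ap p c' → mesRho b Ap p c ≤ mesRho b Ap p c'})
  else none

/-- The voters' budgets at the start of round `t` under MES with price `p`. -/
def mesB {n : ℕ} (p : ℝ) (C : ℕ → Finset ℕ) (A : ℕ → Profile n) : ℕ → Fin n → ℝ
  | 0 => fun _ => 1
  | t + 1 => fun i =>
      match mesWinner (mesB p C A t) (A t) p (C t) with
      | none => mesB p C A t i
      | some c =>
          if c ∈ A t i then
            mesB p C A t i - min (mesB p C A t i) (mesRho (mesB p C A t) (A t) p c)
          else mesB p C A t i

/-- The Method of Equal Shares (no completion procedure): the round-`t` winner,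
or `none` if MES selects no alternative in round `t`. -/
def mesRule {n : ℕ} (p : ℝ) (C : ℕ → Finset ℕ) (A : ℕ → Profile n) (t : ℕ) :
    Option ℕ :=
  mesWinner (mesB p C A t) (A t) p (C t)

/-- Satisfaction of group `G` under MES: rounds in which a winner is selected and
approved (in the reference profile `A`) by some member of `G`. -/
def mesSatAgainst {n : ℕ} (p : ℝ) (C : ℕ → Finset ℕ) (B A : ℕ → Profile n)
    (T : ℕ) (G : Finset (Fin n)) : ℕ :=
  ((Finset.range T).filter fun t => ∃ i ∈ G, ∃ c, mesRule p C B t = some c ∧ c ∈ A t i).card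

end
section Aux

variable {n : ℕ}

lemma mesB_nonneg (p : ℝ) (C : ℕ → Finset ℕ) (A : ℕ → Profile n) :
    ∀ t i, 0 ≤ mesB p C A t i := by
  intro t
  induction t with
  | zero => intro i; simp [mesB]
  | succ t ih =>
      intro i
      simp only [mesB]
      cases h : mesWinner (mesB p C A t) (A t) p (C t) with
      | none => exact ih i
      | some c =>
          by_cases hc : c ∈ A t i
          · simp only [hc, if_pos]
            exact sub_nonneg.mpr (min_le_left _ _)
          · simp only [hc, if_neg, ite_false]
            exact ih i

lemma mesB_congr (p : ℝ) (C : ℕ → Finset ℕ) (A B : ℕ → Profile n) :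
    ∀ t, (∀ s, s < t → A s = B s) → mesB p C A t = mesB p C B t := by
  intro t
  induction t with
  | zero => intro _; rfl
  | succ t ih =>
      intro h
      have hAB : A t = B t := h t (Nat.lt_succ_self t)
      have hB : mesB p C A t = mesB p C B t :=
        ih fun s hs => h s (hs.trans (Nat.lt_succ_self t))
      funext i
      simp only [mesB, hAB, hB]

lemma mesWinner_erase {b : Fin n → ℝ} (hb : ∀ j, 0 ≤ b j) {Ap : Profile n}
    {p : ℝ} {Ct : Finset ℕ} {i : Fin n} {d : ℕ}
    (hd : mesWinner b Ap p Ct ≠ some d) :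
    mesWinner b (Function.update Ap i ((Ap i).erase d)) p Ct = mesWinner b Ap p Ct := by
  set Ap' : Profile n := Function.update Ap i ((Ap i).erase d) with hAp'
  have hmem : ∀ c (j : Fin n), c ≠ d → (c ∈ Ap' j ↔ c ∈ Ap j) := by
    intro c j hc
    by_cases hj : j = i
    · subst hj; simp [hAp', Function.update_self, Finset.mem_erase, hc]
    · simp [hAp', Function.update_of_ne hj]
  have hmemd : ∀ (j : Fin n), d ∈ Ap' j → d ∈ Ap j := by
    intro j h
    by_cases hj : j = i
    · subst hj
      simp [hAp', Function.update_self, Finset.mem_erase] at h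
    · simpa [hAp', Function.update_of_ne hj] using h
  have paySum_eq : ∀ c (ρ : ℝ), c ≠ d → paySum b Ap' c ρ = paySum b Ap c ρ := by
    intro c ρ hc
    unfold paySum
    exact Finset.sum_congr rfl fun j _ => by rw [if_congr (hmem c j hc) rfl rfl]
  have paySum_le : ∀ ρ : ℝ, 0 ≤ ρ → paySum b Ap' d ρ ≤ paySum b Ap d ρ := by
    intro ρ hρ
    apply Finset.sum_le_sum
    intro j _
    by_cases h : d ∈ Ap' j
    · rw [if_pos h, if_pos (hmemd j h)]
    · rw [if_neg h]
      split_ifs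
      · exact le_min (hb j) hρ
      · exact le_refl _
  have Aff_eq : ∀ c, c ≠ d → (Affordable b Ap' p c ↔ Affordable b Ap p c) := by
    intro c hc
    unfold Affordable
    constructor <;> rintro ⟨ρ, hρ, h⟩ <;> exact ⟨ρ, hρ, by rwa [paySum_eq c ρ hc] at *⟩
  have rho_eq : ∀ c, c ≠ d → mesRho b Ap' p c = mesRho b Ap p c := by
    intro c hc
    unfold mesRho
    congr 1
    ext ρ
    simp [paySum_eq c ρ hc]
  have Affd : Affordable b Ap' p d → Affordable b Ap p d := by
    rintro ⟨ρ, hρ, h⟩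
    exact ⟨ρ, hρ, h.trans (paySum_le ρ hρ)⟩
  have rho_d : Affordable b Ap' p d → mesRho b Ap p d ≤ mesRho b Ap' p d := by
    rintro ⟨ρ, hρ, h⟩
    apply csInf_le_csInf
    · exact ⟨0, fun x hx => hx.1⟩
    · exact ⟨ρ, hρ, h⟩
    · rintro x ⟨hx0, hx⟩
      exact ⟨hx0, hx.trans (paySum_le x hx0)⟩
  by_cases hex : ∃ c ∈ Ct, Affordable b Ap p c
  · -- winner exists under Ap
    set S : Set ℕ := {c : ℕ | c ∈ Ct ∧ Affordable b Ap p c ∧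
      ∀ c' ∈ Ct, Affordable b Ap p c' → mesRho b Ap p c ≤ mesRho b Ap p c'} with hS
    set S' : Set ℕ := {c : ℕ | c ∈ Ct ∧ Affordable b Ap' p c ∧
      ∀ c' ∈ Ct, Affordable b Ap' p c' → mesRho b Ap' p c ≤ mesRho b Ap' p c'} with hS'
    -- S is nonempty
    obtain ⟨c0, hc0, haff0⟩ := hex
    obtain ⟨w0, hw0F, hw0min⟩ := Finset.exists_min_image
      (Ct.filter (Affordable b Ap p)) (mesRho b Ap p)
      ⟨c0, Finset.mem_filter.mpr ⟨hc0, haff0⟩⟩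
    have hw0S : w0 ∈ S := by
      obtain ⟨hw0c, hw0a⟩ := Finset.mem_filter.mp hw0F
      exact ⟨hw0c, hw0a, fun c' hc' ha' => hw0min c' (Finset.mem_filter.mpr ⟨hc', ha'⟩)⟩
    have hwS : sInf S ∈ S := Nat.sInf_mem ⟨w0, hw0S⟩
    set w := sInf S with hw
    have hexx : ∃ c ∈ Ct, Affordable b Ap p c := ⟨c0, hc0, haff0⟩
    have hwd : w ≠ d := by
      intro hcon
      apply hd
      rw [mesWinner, if_pos hexx]
      exact congrArg some hcon
    have hwaff' : Affordable b Ap' p w := (Aff_eq w hwd).mpr hwS.2.1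
    have hex' : ∃ c ∈ Ct, Affordable b Ap' p c := ⟨w, hwS.1, hwaff'⟩
    -- S \ {d} ⊆ S'
    have hsub1 : ∀ c ∈ S, c ≠ d → c ∈ S' := by
      rintro c ⟨hcC, hca, hcmin⟩ hcd
      refine ⟨hcC, (Aff_eq c hcd).mpr hca, ?_⟩
      intro c' hc' ha'
      by_cases hcd' : c' = d
      · rw [hcd'] at hc' ha' ⊢
        rw [rho_eq c hcd]
        exact (hcmin d hc' (Affd ha')).trans (rho_d ha')
      · rw [rho_eq c hcd, rho_eq c' hcd']
        exact hcmin c' hc' ((Aff_eq c' hcd').mp ha')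
    -- S' ⊆ S
    have hsub2 : S' ⊆ S := by
      rintro c ⟨hcC, hca', hcmin'⟩
      by_cases hcd : c = d
      · rw [hcd] at hcC hca' hcmin' ⊢
        refine ⟨hcC, Affd hca', ?_⟩
        intro c' hc' ha'
        by_cases hcd' : c' = d
        · rw [hcd']
        · calc mesRho b Ap p d ≤ mesRho b Ap' p d := rho_d hca'
            _ ≤ mesRho b Ap' p c' := hcmin' c' hc' ((Aff_eq c' hcd').mpr ha')
            _ = mesRho b Ap p c' := rho_eq c' hcd'
      · refine ⟨hcC, (Aff_eq c hcd).mp hca', ?_⟩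
        intro c' hc' ha'
        by_cases hcd' : c' = d
        · rw [hcd'] at hc' ha' ⊢
          have h1 : mesRho b Ap' p c ≤ mesRho b Ap' p w := hcmin' w hwS.1 hwaff'
          rw [rho_eq c hcd, rho_eq w hwd] at h1
          exact h1.trans (hwS.2.2 d hc' ha')
        · have h1 : mesRho b Ap' p c ≤ mesRho b Ap' p c' :=
            hcmin' c' hc' ((Aff_eq c' hcd').mpr ha')
          rwa [rho_eq c hcd, rho_eq c' hcd'] at h1
    have hwS' : w ∈ S' := hsub1 w hwS hwd
    have hinf : sInf S' = sInf S := by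
      apply le_antisymm
      · exact Nat.sInf_le hwS'
      · exact Nat.sInf_le (hsub2 (Nat.sInf_mem ⟨w, hwS'⟩))
    rw [mesWinner, mesWinner, if_pos hex', if_pos hexx]
    exact congrArg some hinf
  · -- no winner under Ap
    have hex' : ¬ ∃ c ∈ Ct, Affordable b Ap' p c := by
      rintro ⟨c, hcC, hca⟩
      apply hex
      by_cases hcd : c = d
      · rw [hcd] at hca hcC
        exact ⟨d, hcC, Affd hca⟩
      · exact ⟨c, hcC, (Aff_eq c hcd).mp hca⟩
    rw [mesWinner, mesWinner, if_neg hex', if_neg hex]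

end Aux

/-- MES (lexicographic tie-breaking, no completion procedure)
satisfies OIIA: removing a non-winning alternative from a voter's current-round
approval set does not change the current-round winner (including termination
without a winner). -/
theorem mes_oiia {n : ℕ} (p : ℝ) (hp : 0 < p) (C : ℕ → Finset ℕ)
    (A : ℕ → Profile n) (t : ℕ) (i : Fin n) (d : ℕ)
    (hd : mesRule p C A t ≠ some d) :
    mesRule p C (updateRound A t i ((A t i).erase d)) t = mesRule p C A t := by
  have hB : mesB p C (updateRound A t i ((A t i).erase d)) t = mesB p C A t := by
    apply mesB_congr
    intro s hs
    simp [updateRound, Nat.ne_of_lt hs]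
  have ht : updateRound A t i ((A t i).erase d) t = Function.update (A t) i ((A t i).erase d) := by
    simp [updateRound]
  unfold mesRule at *
  rw [hB, ht]
  exact mesWinner_erase (mesB_nonneg p C A t) hd
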